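/- Principal part of the quadratic density (Proposition A.2, pointwise/bilinear-form version). The scalar rational function Q(z) = −B(Γ(z), Γ(z))/(2 φ(z)) satisfies Q(z) = −Σ_{α∈Σ} Σ_{p=0}^{m_α−1} D^α_p (z−z_α)^{−(p+1)} + Q_reg(z), where Q_reg is a rational function that is holomorphic at every point z_α (α ∈ Σ). In other words, at each z_α the principal part of Q is exactly −Σ_{p=0}^{m_α−1} D^α_p (z−z_α)^{−(p+1)}. -/

import Mathlib

open scoped BigOperators Topology
open Filter

/-- The partial-fraction part `χ(w)` of a twist function (site `a` has multiplicity `m a + 1`). -/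
noncomputable def chiFun {n : ℕ} (z : Fin n → ℂ) (m : Fin n → ℕ)
    (l : Fin n → ℕ → ℂ) (w : ℂ) : ℂ :=
  ∑ a, ∑ p ∈ Finset.range (m a + 1), l a p / (w - z a) ^ (p + 1)

/-- A `V`-valued Gaudin Lax matrix `Γ(w) = Σ_α Σ_p v^α_p (w - z_α)^{-(p+1)}`. -/
noncomputable def gamFun {n : ℕ} {V : Type*} [AddCommGroup V] [Module ℂ V]
    (z : Fin n → ℂ) (m : Fin n → ℕ) (v : Fin n → ℕ → V) (w : ℂ) : V :=
  ∑ a, ∑ p ∈ Finset.range (m a + 1), ((w - z a) ^ (p + 1))⁻¹ • v a p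

/-- The generalised Segal–Sugawara quantity
`D^α_p = (1/2) Σ_{q,r, q+r ≥ p} κ^α_{q+r-p} B(v^α_q, v^α_r)`. -/
noncomputable def ssInt {n : ℕ} {V : Type*} [AddCommGroup V] [Module ℂ V]
    (B : V →ₗ[ℂ] V →ₗ[ℂ] ℂ) (m : Fin n → ℕ) (κ : Fin n → ℕ → ℂ)
    (v : Fin n → ℕ → V) (a : Fin n) (p : ℕ) : ℂ :=
  (1 / 2) * ∑ q ∈ Finset.range (m a + 1), ∑ r ∈ Finset.range (m a + 1),
    if p ≤ q + r then κ a (q + r - p) * B (v a q) (v a r) else 0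

/-!
Fix a site `a`, put `x = z a`, `u = w - x`, and let `M + 1` be its multiplicity. Clearing the
denominator `u ^ (M + 1)`, the twist function becomes `ψ(w) = P_l(u) + u ^ (M + 1) g(w)` with
`g` regular at `x` and `ψ(x) = l_M ≠ 0`, where `P_c(u) = Σ_p c_p u ^ (M - p)`. Likewise
`Q + S = (2 φ S - B(Γ, Γ)) / (2 φ)`, with `S` the proposed principal part, equals
`N(w) / (2 ψ(w))`, where every contribution to `N = u ^ (M + 1) (2 φ S - B(Γ, Γ))` is regular
at `x` except `u ^ (-(M + 1)) (2 P_l P_D - P_β)(u)` coming from the polar parts at `x` alone,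
where `P_β(u) = Σ_{q,r} B(v_q, v_r) u ^ (2M - q - r)`. The linear system for `κ` implies that
`u ^ (M + 1)` divides the polynomial `2 P_l P_D - P_β` (coefficientwise, this is a convolution
of `κ` with `l` collapsing to a Kronecker delta), so `N`, and hence `Q + S`, extend continuously
to `x`.
-/

open Finset Polynomial

theorem sum_kappa_mul_l_eq_ite {R : Type*} [CommSemiring R] {M s d : ℕ} {l κ : ℕ → R}
    (hκ : ∀ q r : ℕ, q ≤ M → r ≤ M →
      ∑ p ∈ range (M + 1 - r), κ (p + q) * l (p + r) = if q = r then 1 else 0)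
    (hs : s ≤ 2 * M) (hd : d ≤ M) :
    ∑ k ∈ range (d + 1), (if M - k ≤ s then κ (s - (M - k)) * l (M - d + k) else 0)
      = if s + d = 2 * M then 1 else 0 := by
  rcases le_or_gt M s with hMs | hsM
  · have h := hκ (s - M) (M - d) (by omega) (by omega)
    rw [show M + 1 - (M - d) = d + 1 by omega] at h
    convert h using 1
    · refine sum_congr rfl fun k hk => ?_
      rw [mem_range] at hk
      rw [if_pos (by omega), show s - (M - k) = k + (s - M) by omega,
        show M - d + k = k + (M - d) by omega]
    · exact if_congr (by omega) rfl rfl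
  rcases le_or_gt (M - s) d with hds | hds
  · have h := hκ 0 (2 * M - s - d) (by omega) (by omega)
    rw [show d + 1 = (M - s) + (M + 1 - (2 * M - s - d)) by omega, sum_range_add,
      sum_eq_zero fun k hk => if_neg (by rw [mem_range] at hk; omega), zero_add]
    convert h using 1
    · refine sum_congr rfl fun k hk => ?_
      rw [mem_range] at hk
      rw [if_pos (by omega), show s - (M - (M - s + k)) = k + 0 by omega,
        show M - d + (M - s + k) = k + (2 * M - s - d) by omega]
    · exact if_congr (by omega) rfl rfl
  rw [sum_eq_zero fun k hk => if_neg (by rw [mem_range] at hk; omega), if_neg (by omega)]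

noncomputable def polarNumerator {R : Type*} [Semiring R] (M : ℕ) (c : ℕ → R) : R[X] :=
  ∑ p ∈ range (M + 1), C (c p) * X ^ (M - p)

theorem coeff_polarNumerator {R : Type*} [Semiring R] (M : ℕ) (c : ℕ → R) (d : ℕ) :
    (polarNumerator M c).coeff d = if d ≤ M then c (M - d) else 0 := by
  simp only [polarNumerator, finsetSum_coeff, coeff_C_mul_X_pow]
  split_ifs with hd
  · rw [sum_eq_single (M - d) (fun p hp hne => if_neg (by rw [mem_range] at hp; omega))
      (fun h => absurd (mem_range.2 (by omega)) h), if_pos (by omega)]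
  · exact sum_eq_zero fun p hp => if_neg (by rw [mem_range] at hp; omega)

theorem eval_polarNumerator {R : Type*} [CommSemiring R] (M : ℕ) (c : ℕ → R) (y : R) :
    (polarNumerator M c).eval y = ∑ p ∈ range (M + 1), c p * y ^ (M - p) := by
  simp [polarNumerator, eval_finsetSum]

/-- `ssInt B m κ v a` is `sugawaraCoeff (m a) (κ a) (fun q r => B (v a q) (v a r))` by `rfl`. -/
noncomputable def sugawaraCoeff (M : ℕ) (κ : ℕ → ℂ) (β : ℕ → ℕ → ℂ) (p : ℕ) : ℂ :=
  (1 / 2) * ∑ q ∈ range (M + 1), ∑ r ∈ range (M + 1),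
    if p ≤ q + r then κ (q + r - p) * β q r else 0

theorem X_pow_succ_dvd_sugawara {M : ℕ} {l κ : ℕ → ℂ}
    (hκ : ∀ q r : ℕ, q ≤ M → r ≤ M →
      ∑ p ∈ range (M + 1 - r), κ (p + q) * l (p + r) = if q = r then 1 else 0)
    (β : ℕ → ℕ → ℂ) :
    X ^ (M + 1) ∣ 2 * polarNumerator M l * polarNumerator M (sugawaraCoeff M κ β)
      - ∑ q ∈ range (M + 1), X ^ (M - q) * polarNumerator M (β q) := by
  rw [X_pow_dvd_iff]
  intro d hd
  rw [Nat.lt_succ_iff] at hd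
  rw [coeff_sub, sub_eq_zero, mul_assoc, coeff_ofNat_mul, mul_comm (polarNumerator M l),
    coeff_mul, Nat.sum_antidiagonal_eq_sum_range_succ (fun i j => coeff _ i * coeff _ j),
    finsetSum_coeff]
  conv_rhs => simp only [coeff_X_pow_mul', coeff_polarNumerator]
  calc 2 * ∑ k ∈ range (d + 1), (polarNumerator M (sugawaraCoeff M κ β)).coeff k
          * (polarNumerator M l).coeff (d - k)
      = ∑ k ∈ range (d + 1), ∑ q ∈ range (M + 1), ∑ r ∈ range (M + 1), β q r *
          (if M - k ≤ q + r then κ (q + r - (M - k)) * l (M - d + k) else 0) := by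
        rw [mul_sum]
        refine sum_congr rfl fun k hk => ?_
        rw [mem_range] at hk
        rw [coeff_polarNumerator, coeff_polarNumerator, if_pos (by omega), if_pos (by omega),
          show M - (d - k) = M - d + k by omega, sugawaraCoeff, ← mul_assoc, ← mul_assoc,
          show (2 : ℂ) * (1 / 2) = 1 by norm_num, one_mul, sum_mul]
        refine sum_congr rfl fun q _ => ?_
        rw [sum_mul]
        refine sum_congr rfl fun r _ => ?_
        split_ifs <;> ring
    _ = ∑ q ∈ range (M + 1), ∑ r ∈ range (M + 1), β q r * ∑ k ∈ range (d + 1),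
          (if M - k ≤ q + r then κ (q + r - (M - k)) * l (M - d + k) else 0) := by
        rw [sum_comm]
        refine sum_congr rfl fun q _ => ?_
        rw [sum_comm]
        simp only [mul_sum]
    _ = ∑ q ∈ range (M + 1), ∑ r ∈ range (M + 1), if q + r + d = 2 * M then β q r else 0 := by
        refine sum_congr rfl fun q hq => sum_congr rfl fun r hr => ?_
        rw [mem_range] at hq hr
        rw [sum_kappa_mul_l_eq_ite hκ (by omega) hd, mul_ite, mul_one, mul_zero]
    _ = ∑ q ∈ range (M + 1),
          if M - q ≤ d then if d - (M - q) ≤ M then β q (M - (d - (M - q))) else 0 else 0 := by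
        refine sum_congr rfl fun q hq => ?_
        rw [mem_range] at hq
        rw [sum_congr rfl fun r _ =>
          if_congr (show q + r + d = 2 * M ↔ 2 * M - d - q = r by omega) rfl rfl, sum_ite_eq]
        simp only [mem_range]
        split_ifs <;> first | rfl | (exfalso; omega) | (congr 1; omega)

section PolarSum

variable {E F G : Type*} [AddCommGroup E] [Module ℂ E] [AddCommGroup F] [Module ℂ F]
  [AddCommGroup G] [Module ℂ G]

/-- `gamFun z m v w` is `∑ b, polarSum (z b) (m b) (v b) w` by `rfl`. -/
noncomputable def polarSum (x : ℂ) (M : ℕ) (c : ℕ → E) (w : ℂ) : E :=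
  ∑ p ∈ range (M + 1), ((w - x) ^ (p + 1))⁻¹ • c p

theorem polarSum_eq_sum_div (x : ℂ) (M : ℕ) (c : ℕ → ℂ) (w : ℂ) :
    polarSum x M c w = ∑ p ∈ range (M + 1), c p / (w - x) ^ (p + 1) := by
  simp only [polarSum, smul_eq_mul, div_eq_inv_mul]

theorem polarSum_add (x : ℂ) (M : ℕ) (c c' : ℕ → E) (w : ℂ) :
    polarSum x M (fun p => c p + c' p) w = polarSum x M c w + polarSum x M c' w := by
  simp only [polarSum, smul_add, sum_add_distrib]

theorem LinearMap.map_polarSum (f : E →ₗ[ℂ] F) (x : ℂ) (M : ℕ) (c : ℕ → E) (w : ℂ) :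
    f (polarSum x M c w) = polarSum x M (fun p => f (c p)) w := by
  simp only [polarSum, map_sum, map_smul]

theorem polarSum_apply (x : ℂ) (M : ℕ) (c : ℕ → E →ₗ[ℂ] F) (w : ℂ) (y : E) :
    polarSum x M c w y = polarSum x M (fun p => c p y) w := by
  simp only [polarSum, LinearMap.sum_apply, LinearMap.smul_apply]

theorem LinearMap.map_polarSum_polarSum (B : E →ₗ[ℂ] F →ₗ[ℂ] G) (x : ℂ) (M : ℕ) (c : ℕ → E)
    (c' : ℕ → F) (w : ℂ) :
    B (polarSum x M c w) (polarSum x M c' w)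
      = polarSum x M (fun q => polarSum x M (fun r => B (c q) (c' r)) w) w := by
  rw [B.map_polarSum, polarSum_apply]
  simp only [LinearMap.map_polarSum]

theorem pow_succ_smul_polarSum {x w : ℂ} (hw : w ≠ x) (M : ℕ) (c : ℕ → E) :
    (w - x) ^ (M + 1) • polarSum x M c w = ∑ p ∈ range (M + 1), (w - x) ^ (M - p) • c p := by
  have hu : w - x ≠ 0 := sub_ne_zero.2 hw
  rw [polarSum, smul_sum]
  refine sum_congr rfl fun p hp => ?_
  rw [mem_range] at hp
  rw [smul_smul, show M + 1 = (M - p) + (p + 1) by omega, pow_add, mul_assoc,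
    mul_inv_cancel₀ (pow_ne_zero _ hu), mul_one]

theorem pow_succ_mul_polarSum {x w : ℂ} (hw : w ≠ x) (M : ℕ) (c : ℕ → ℂ) :
    (w - x) ^ (M + 1) * polarSum x M c w = (polarNumerator M c).eval (w - x) := by
  rw [← smul_eq_mul, pow_succ_smul_polarSum hw, eval_polarNumerator]
  simp only [smul_eq_mul, mul_comm]

theorem LinearMap.map_polarSum_add_self (B : E →ₗ[ℂ] E →ₗ[ℂ] G) (x : ℂ) (M : ℕ) (c : ℕ → E)
    (w : ℂ) (h : E) :
    B (polarSum x M c w + h) (polarSum x M c w + h)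
      = polarSum x M (fun q => polarSum x M (fun r => B (c q) (c r)) w) w
        + polarSum x M (fun q => B (c q) h + B h (c q)) w + B h h := by
  rw [map_add, map_add, LinearMap.add_apply, LinearMap.add_apply, B.map_polarSum_polarSum,
    polarSum_add, (B h).map_polarSum, B.map_polarSum, polarSum_apply]
  abel

end PolarSum

theorem continuousAt_polarSum {E : Type*} [NormedAddCommGroup E] [NormedSpace ℂ E]
    {x y : ℂ} (hy : y ≠ x) (M : ℕ) {c : ℂ → ℕ → E} (hc : ∀ p, ContinuousAt (fun w => c w p) y) :
    ContinuousAt (fun w => polarSum x M (c w) w) y := by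
  refine tendsto_finsetSum _ fun p _ => ContinuousAt.smul ?_ (hc p)
  exact ((continuousAt_id.sub continuousAt_const).pow _).inv₀
    (pow_ne_zero _ (sub_ne_zero.2 hy))

theorem quadratic_density_eq_div {x : ℂ} {M : ℕ} {l κ : ℕ → ℂ} (β : ℕ → ℕ → ℂ) {R : ℂ[X]}
    (hR : 2 * polarNumerator M l * polarNumerator M (sugawaraCoeff M κ β)
      - ∑ q ∈ range (M + 1), X ^ (M - q) * polarNumerator M (β q) = X ^ (M + 1) * R)
    (g k : ℂ) (e : ℕ → ℂ) {w : ℂ} (hw : w ≠ x)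
    (hψ : (polarNumerator M l).eval (w - x) + (w - x) ^ (M + 1) * g ≠ 0) :
    -(polarSum x M (fun q => polarSum x M (β q) w) w + polarSum x M e w + k)
        / (2 * (polarSum x M l w + g)) + polarSum x M (sugawaraCoeff M κ β) w
      = (R.eval (w - x) + 2 * g * (polarNumerator M (sugawaraCoeff M κ β)).eval (w - x)
          - (polarNumerator M e).eval (w - x) - (w - x) ^ (M + 1) * k)
        / (2 * ((polarNumerator M l).eval (w - x) + (w - x) ^ (M + 1) * g)) := by
  set u := w - x
  have hU : u ^ (M + 1) ≠ 0 := pow_ne_zero _ (sub_ne_zero.2 hw)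
  have hl : u ^ (M + 1) * polarSum x M l w = (polarNumerator M l).eval u :=
    pow_succ_mul_polarSum hw M l
  have hD : u ^ (M + 1) * polarSum x M (sugawaraCoeff M κ β) w
      = (polarNumerator M (sugawaraCoeff M κ β)).eval u :=
    pow_succ_mul_polarSum hw M _
  have he : u ^ (M + 1) * polarSum x M e w = (polarNumerator M e).eval u :=
    pow_succ_mul_polarSum hw M e
  have hβ : u ^ (M + 1) * (u ^ (M + 1) * polarSum x M (fun q => polarSum x M (β q) w) w)
      = (∑ q ∈ range (M + 1), X ^ (M - q) * polarNumerator M (β q)).eval u := by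
    rw [pow_succ_mul_polarSum hw, eval_polarNumerator, eval_finsetSum, mul_sum]
    refine sum_congr rfl fun q _ => ?_
    rw [eval_mul, eval_X_pow, ← pow_succ_mul_polarSum hw]
    ring
  have hRu := congrArg (eval u) hR
  simp only [eval_sub, eval_mul, eval_ofNat, eval_X_pow] at hRu
  -- the polar parts at `x` alone combine into the polynomial `R`
  have key : 2 * polarSum x M l w * (polarNumerator M (sugawaraCoeff M κ β)).eval u
      - u ^ (M + 1) * polarSum x M (fun q => polarSum x M (β q) w) w = R.eval u := by
    refine mul_left_cancel₀ hU ?_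
    linear_combination (polarNumerator M (sugawaraCoeff M κ β)).eval u * 2 * hl - hβ + hRu
  have hφ : 2 * (polarSum x M l w + g) ≠ 0 := by
    refine mul_ne_zero two_ne_zero fun h => hψ ?_
    rw [← hl, ← mul_add, h, mul_zero]
  rw [div_add' _ _ _ hφ, div_eq_div_iff hφ (mul_ne_zero two_ne_zero hψ)]
  set φ := polarSum x M l w
  set Q := polarSum x M (fun q => polarSum x M (β q) w) w
  linear_combination -2 * (2 * (φ + g) * polarSum x M (sugawaraCoeff M κ β) w - Q
      - polarSum x M e w - k) * hl + 2 * (φ + g) * key + 4 * (φ + g) ^ 2 * hD - 2 * (φ + g) * he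

theorem exists_tendsto_quadratic_density_add_polarSum {x : ℂ} {M : ℕ} {l κ : ℕ → ℂ}
    (hκ : ∀ q r : ℕ, q ≤ M → r ≤ M →
      ∑ p ∈ range (M + 1 - r), κ (p + q) * l (p + r) = if q = r then 1 else 0)
    (hl : l M ≠ 0) (β : ℕ → ℕ → ℂ) {g k : ℂ → ℂ} {e : ℂ → ℕ → ℂ}
    (hg : ContinuousAt g x) (hk : ContinuousAt k x) (he : ∀ q, ContinuousAt (fun w => e w q) x) :
    ∃ c, Tendsto (fun w =>
        -(polarSum x M (fun q => polarSum x M (β q) w) w + polarSum x M (e w) w + k w)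
          / (2 * (polarSum x M l w + g w)) + polarSum x M (sugawaraCoeff M κ β) w)
      (𝓝[≠] x) (𝓝 c) := by
  obtain ⟨R, hR⟩ := X_pow_succ_dvd_sugawara hκ β
  set ψ : ℂ → ℂ := fun w => (polarNumerator M l).eval (w - x) + (w - x) ^ (M + 1) * g w
  have hψ : ContinuousAt ψ x := by fun_prop
  have hψx : ψ x ≠ 0 := by
    simpa [ψ, ← coeff_zero_eq_eval_zero, coeff_polarNumerator] using hl
  set F : ℂ → ℂ := fun w =>
    (R.eval (w - x) + 2 * g w * (polarNumerator M (sugawaraCoeff M κ β)).eval (w - x)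
      - (polarNumerator M (e w)).eval (w - x) - (w - x) ^ (M + 1) * k w) / (2 * ψ w)
  have hF : ContinuousAt F x := by
    simp only [F, eval_polarNumerator]
    fun_prop (disch := exact mul_ne_zero two_ne_zero hψx)
  refine ⟨F x, Tendsto.congr' ?_ (hF.tendsto.mono_left nhdsWithin_le_nhds)⟩
  filter_upwards [self_mem_nhdsWithin, (hψ.eventually_ne hψx).filter_mono nhdsWithin_le_nhds]
    with w hw hψw
  exact (quadratic_density_eq_div β hR (g w) (k w) (e w) hw hψw).symm

section RegularPart

variable {ι E : Type*} (s : Finset ι) {z : ι → ℂ} {x : ℂ} (hz : ∀ b ∈ s, z b ≠ x) (m : ι → ℕ)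
include hz

theorem continuousAt_sum_polarSum [NormedAddCommGroup E] [NormedSpace ℂ E] (c : ι → ℕ → E) :
    ContinuousAt (fun w => ∑ b ∈ s, polarSum (z b) (m b) (c b) w) x :=
  tendsto_finsetSum _ fun b hb =>
    continuousAt_polarSum (hz b hb).symm _ fun _ => continuousAt_const

variable [AddCommGroup E] [Module ℂ E] (c : ι → ℕ → E)

theorem continuousAt_map_sum_polarSum (f : E →ₗ[ℂ] ℂ) :
    ContinuousAt (fun w => f (∑ b ∈ s, polarSum (z b) (m b) (c b) w)) x := by
  simp only [map_sum, f.map_polarSum]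
  exact continuousAt_sum_polarSum s hz m _

theorem continuousAt_bilin_sum_polarSum (B : E →ₗ[ℂ] E →ₗ[ℂ] ℂ) :
    ContinuousAt (fun w => B (∑ b ∈ s, polarSum (z b) (m b) (c b) w)
      (∑ b ∈ s, polarSum (z b) (m b) (c b) w)) x := by
  simp only [map_sum B, LinearMap.sum_apply, B.map_polarSum, polarSum_apply]
  exact tendsto_finsetSum _ fun b hb => continuousAt_polarSum (hz b hb).symm _
    fun p => continuousAt_map_sum_polarSum s hz m c (B (c b p))

end RegularPart

theorem principal_part_of_quadratic_density_general
    {n : ℕ} {V : Type*} [AddCommGroup V] [Module ℂ V]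
    (B : V →ₗ[ℂ] V →ₗ[ℂ] ℂ)
    (z : Fin n → ℂ) (m : Fin n → ℕ) (l : Fin n → ℕ → ℂ)
    (linf : ℂ)
    (hz : Function.Injective z)
    (hl : ∀ a, l a (m a) ≠ 0)
    -- the coefficients `κ^α_p`, characterised by the linear system (2.8) of the paper
    (κ : Fin n → ℕ → ℂ)
    (hκ : ∀ a, ∀ q r : ℕ, q ≤ m a → r ≤ m a →
      ∑ p ∈ Finset.range (m a + 1 - r), κ a (p + q) * l a (p + r)
        = if q = r then 1 else 0)
    (v : Fin n → ℕ → V) :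
    ∀ a : Fin n, ∃ c : ℂ,
      Filter.Tendsto
        (fun w =>
          -(B (gamFun z m v w) (gamFun z m v w)) / (2 * (chiFun z m l w - linf))
            + ∑ b, ∑ p ∈ Finset.range (m b + 1),
                ssInt B m κ v b p / (w - z b) ^ (p + 1))
        (𝓝[≠] (z a)) (𝓝 c) := by
  intro a
  have hza : ∀ b ∈ univ.erase a, z b ≠ z a := fun b hb => hz.ne (ne_of_mem_erase hb)
  let H : ℂ → V := fun w => ∑ b ∈ univ.erase a, polarSum (z b) (m b) (v b) w
  let g : ℂ → ℂ := fun w => ∑ b ∈ univ.erase a, polarSum (z b) (m b) (l b) w - linf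
  let T : ℂ → ℂ := fun w => ∑ b ∈ univ.erase a, polarSum (z b) (m b) (ssInt B m κ v b) w
  have hT : ContinuousAt T (z a) := continuousAt_sum_polarSum _ hza m _
  obtain ⟨c, hc⟩ := exists_tendsto_quadratic_density_add_polarSum (hκ a) (hl a)
    (fun q r => B (v a q) (v a r)) ((continuousAt_sum_polarSum _ hza m l).sub continuousAt_const)
    (continuousAt_bilin_sum_polarSum _ hza m v B)
    (e := fun w q => B (v a q) (H w) + B (H w) (v a q))
    fun q => (continuousAt_map_sum_polarSum _ hza m v (B (v a q))).add
      (continuousAt_map_sum_polarSum _ hza m v (B.flip (v a q)))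
  refine ⟨c + T (z a), (hc.add (hT.tendsto.mono_left nhdsWithin_le_nhds)).congr fun w => ?_⟩
  have hΓ : gamFun z m v w = polarSum (z a) (m a) (v a) w + H w :=
    (add_sum_erase _ _ (mem_univ a)).symm
  have hχ : chiFun z m l w - linf = polarSum (z a) (m a) (l a) w + g w := by
    simp only [chiFun, g, ← polarSum_eq_sum_div, ← add_sum_erase _ _ (mem_univ a)]
    ring
  have hD : ∑ b, ∑ p ∈ range (m b + 1), ssInt B m κ v b p / (w - z b) ^ (p + 1)
      = polarSum (z a) (m a) (ssInt B m κ v a) w + T w := by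
    simp only [T, ← polarSum_eq_sum_div, ← add_sum_erase _ _ (mem_univ a)]
  rw [hD, hχ, hΓ, B.map_polarSum_add_self]
  exact add_assoc _ _ _

/-- **Principal part of the quadratic density** (Proposition A.2, pointwise/bilinear-form
version).  The scalar rational function `Q(z) = -B(Γ(z), Γ(z))/(2 φ(z))` satisfies
`Q(z) = -Σ_α Σ_p D^α_p (z - z_α)^{-(p+1)} + Q_reg(z)` with `Q_reg` holomorphic at every `z_α`;
i.e. `Q(z) + Σ_α Σ_p D^α_p (z - z_α)^{-(p+1)}` has a (finite) limit at each `z_α`. -/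
theorem principal_part_of_quadratic_density
    {n : ℕ} {V : Type*} [AddCommGroup V] [Module ℂ V]
    (B : V →ₗ[ℂ] V →ₗ[ℂ] ℂ) (hB : ∀ x y, B x y = B y x)
    (z : Fin n → ℂ) (m : Fin n → ℕ) (l : Fin n → ℕ → ℂ)
    (linf : ℂ)
    (hz : Function.Injective z)
    (hl : ∀ a, l a (m a) ≠ 0)
    -- the coefficients `κ^α_p`, characterised by the linear system (2.8) of the paper
    (κ : Fin n → ℕ → ℂ)
    (hκ : ∀ a, ∀ q r : ℕ, q ≤ m a → r ≤ m a →
      ∑ p ∈ Finset.range (m a + 1 - r), κ a (p + q) * l a (p + r)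
        = if q = r then 1 else 0)
    (v : Fin n → ℕ → V) :
    ∀ a : Fin n, ∃ c : ℂ,
      Filter.Tendsto
        (fun w =>
          -(B (gamFun z m v w) (gamFun z m v w)) / (2 * (chiFun z m l w - linf))
            + ∑ b, ∑ p ∈ Finset.range (m b + 1),
                ssInt B m κ v b p / (w - z b) ^ (p + 1))
        (𝓝[≠] (z a)) (𝓝 c) :=
  principal_part_of_quadratic_density_general B z m l linf hz hl κ hκ v
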